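/- (Overlap-overlap case of the diagonal-cost lemma) Let a = ([q_s..q_e],[t_s..t_e]) and a' = ([q_s'..q_e'],[t_s'..t_e']) be anchors with a ≺ a' or a ≺_w a'. If a overlaps a' in both coordinates, i.e. q_s' ≤ q_e ≤ q_e' and t_s' ≤ t_e ≤ t_e', then gap(a,a') = 0 and connect(a,a') = |diag(a) − diag(a')|. -/
import Mathlib


/-- An anchor: a pair of integer intervals `([qs..qe],[ts..te])`. -/
structure Anchor where
  qs : ℤ
  qe : ℤ
  ts : ℤ
  te : ℤ
deriving DecidableEq

/-- `a` is a well-formed anchor: nonempty intervals satisfying the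
    exact-match invariant `qe - qs = te - ts`. -/
def Anchor.Valid (a : Anchor) : Prop :=
  a.qs ≤ a.qe ∧ a.ts ≤ a.te ∧ a.qe - a.qs = a.te - a.ts

/-- Strict precedence `a ≺ a'`. -/
def strictPrec (a a' : Anchor) : Prop :=
  a.qs ≤ a'.qs ∧ a.qe ≤ a'.qe ∧ a.ts ≤ a'.ts ∧ a.te ≤ a'.te ∧
    (a.qs < a'.qs ∨ a.qe < a'.qe ∨ a.ts < a'.ts ∨ a.te < a'.te)

/-- Weak precedence `a ≺_w a'`. -/
def weakPrec (a a' : Anchor) : Prop :=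
  a.qs ≤ a'.qs ∧ a.ts ≤ a'.ts ∧ (a.qs < a'.qs ∨ a.ts < a'.ts)

/-- Strong (ChainX) precedence `a ≺_X a'`. -/
def chainxPrec (a a' : Anchor) : Prop :=
  a.qs < a'.qs ∧ a.qe < a'.qe ∧ a.ts < a'.ts ∧ a.te < a'.te

/-- Gap cost `gap(a,a') = max(0, qs' - qe - 1, ts' - te - 1)`. -/
def gapCost (a a' : Anchor) : ℤ :=
  max 0 (max (a'.qs - a.qe - 1) (a'.ts - a.te - 1))

/-- Overlap cost `o(a,a') = |max(0, qe - qs' + 1) - max(0, te - ts' + 1)|`. -/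
def ovCost (a a' : Anchor) : ℤ :=
  |max 0 (a.qe - a'.qs + 1) - max 0 (a.te - a'.ts + 1)|

/-- `connect(a,a') = gap(a,a') + o(a,a')`. -/
def connectCost (a a' : Anchor) : ℤ := gapCost a a' + ovCost a a'

/-- The diagonal of an anchor: `diag(a) = qs - ts`. -/
def Anchor.diag (a : Anchor) : ℤ := a.qs - a.ts


/-- Overlap-overlap case of the diagonal-cost lemma. -/
theorem connect_overlap_overlap (a a' : Anchor)
    (ha : a.Valid) (ha' : a'.Valid)
    (hprec : strictPrec a a' ∨ weakPrec a a')
    (hq1 : a'.qs ≤ a.qe) (hq2 : a.qe ≤ a'.qe)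
    (ht1 : a'.ts ≤ a.te) (ht2 : a.te ≤ a'.te) :
    gapCost a a' = 0 ∧ connectCost a a' = |a.diag - a'.diag| := by 
  obtain ⟨h1, h2, h3⟩ := ha
  simp only [gapCost, connectCost, ovCost, Anchor.diag]
  constructor
  · omega
  · rw [show max 0 (max (a'.qs - a.qe - 1) (a'.ts - a.te - 1)) = 0 by omega,
      show max 0 (a.qe - a'.qs + 1) = a.qe - a'.qs + 1 by omega,
      show max 0 (a.te - a'.ts + 1) = a.te - a'.ts + 1 by omega, zero_add]
    congr 1
    omega
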